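/- (Normalized Hoffman bound.) Let G be a finite simple graph on n vertices with no isolated vertices, at least one edge, and chromatic number χ. Then μ_n* < 0 and 1 ≤ (χ − 1)·(−μ_n*); equivalently, χ ≥ 1 + 1/(−μ_n*). -/

import Mathlib

/-!
The vector `w = D^{1/2} 𝟙` satisfies `𝒜 w = w`. Split `w` along the `χ` colour classes into
pieces `w_i`; since `𝒜` vanishes on pairs of non-adjacent vertices, `w_iᵀ 𝒜 w_i = 0`. The matrix
`𝒜 - μ*_n I` is positive semidefinite, so its quadratic form `q` satisfies
`q(∑ w_i) ≤ χ ∑ q(w_i)` by Cauchy–Schwarz, which reads `(1 - μ*_n) ‖w‖² ≤ χ (-μ*_n) ‖w‖²`.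
-/

open Finset Matrix
open scoped ComplexOrder

lemma sum_indicator_fiber {ι α R : Type*} [Fintype α] [AddCommMonoid R] (c : ι → α)
    (x : ι → R) : ∑ i, {v | c v = i}.indicator x = x := by
  classical
  ext v
  simp [Set.indicator_apply]

lemma Set.indicator_dotProduct_indicator {ι R : Type*} [Fintype ι] [NonUnitalNonAssocSemiring R]
    (s : Set ι) (x : ι → R) : s.indicator x ⬝ᵥ s.indicator x = s.indicator x ⬝ᵥ x := by
  classical
  refine Finset.sum_congr rfl fun v _ => ?_
  by_cases hv : v ∈ s <;> simp [hv]

namespace Matrix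

variable {ι : Type*} [Fintype ι]

lemma indicator_fiber_dotProduct_mulVec_eq_zero {α R : Type*} [NonUnitalNonAssocSemiring R]
    {M : Matrix ι ι R} {c : ι → α} (hM : ∀ u v, c u = c v → M u v = 0) (i : α) (x : ι → R) :
    {v | c v = i}.indicator x ⬝ᵥ (M *ᵥ {v | c v = i}.indicator x) = 0 := by
  classical
  simp only [dotProduct, mulVec, Finset.mul_sum]
  refine Finset.sum_eq_zero fun u _ => Finset.sum_eq_zero fun v _ => ?_
  by_cases hu : c u = i
  · by_cases hv : c v = i
    · simp [hM u v (hu.trans hv.symm)]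
    · simp [hv]
  · simp [hu]

lemma IsHermitian.posSemidef_sub_smul_one {𝕜 : Type*} [RCLike 𝕜] [DecidableEq ι]
    {A : Matrix ι ι 𝕜} (hA : A.IsHermitian) {β : ℝ} (hβ : ∀ i, β ≤ hA.eigenvalues i) :
    (A - β • (1 : Matrix ι ι 𝕜)).PosSemidef := by
  have hdiag : diagonal (RCLike.ofReal ∘ fun i => hA.eigenvalues i - β)
      = diagonal (RCLike.ofReal ∘ hA.eigenvalues) - (β : 𝕜) • (1 : Matrix ι ι 𝕜) := by
    ext i j
    by_cases h : i = j <;> simp [h, Algebra.algebraMap_eq_smul_one, sub_smul]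
  have hshift : A - β • (1 : Matrix ι ι 𝕜) = Unitary.conjStarAlgAut 𝕜 _ hA.eigenvectorUnitary
      (diagonal (RCLike.ofReal ∘ fun i => hA.eigenvalues i - β)) := by
    conv_lhs => rw [hA.spectral_theorem]
    rw [hdiag, map_sub, map_smul, map_one, RCLike.real_smul_eq_coe_smul (K := 𝕜)]
  rw [hshift, Unitary.conjStarAlgAut_apply, Unitary.isUnit_coe.posSemidef_star_right_conjugate_iff,
    posSemidef_diagonal_iff]
  intro i
  simpa using hβ i

lemma PosSemidef.dotProduct_mulVec_sum_le {B : Matrix ι ι ℝ} (hB : B.PosSemidef) {κ : Type*}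
    (s : Finset κ) (x : κ → ι → ℝ) :
    (∑ i ∈ s, x i) ⬝ᵥ (B *ᵥ ∑ i ∈ s, x i) ≤ #s * ∑ i ∈ s, x i ⬝ᵥ (B *ᵥ x i) := by
  obtain ⟨m, v, rfl⟩ := posSemidef_iff_eq_sum_vecMulVec.mp hB
  have hform : ∀ y : ι → ℝ, y ⬝ᵥ ((∑ k, vecMulVec (v k) (star (v k))) *ᵥ y)
      = ∑ k, (v k ⬝ᵥ y) ^ 2 := by
    intro y
    simp [sum_mulVec, vecMulVec_mulVec, dotProduct_sum, sq, dotProduct_comm]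
  simp only [hform, dotProduct_sum]
  rw [Finset.sum_comm, Finset.mul_sum]
  exact Finset.sum_le_sum fun k _ => sq_sum_le_card_mul_sum_sq

lemma dotProduct_sub_smul_one_mulVec [DecidableEq ι] (A : Matrix ι ι ℝ) (β : ℝ) (x : ι → ℝ) :
    x ⬝ᵥ ((A - β • 1) *ᵥ x) = x ⬝ᵥ (A *ᵥ x) - β * (x ⬝ᵥ x) := by
  rw [sub_mulVec, smul_mulVec, one_mulVec, dotProduct_sub, dotProduct_smul, smul_eq_mul]

lemma IsHermitian.hoffman_bound [DecidableEq ι] {N : Matrix ι ι ℝ} (hN : N.IsHermitian) {β : ℝ}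
    (hβ : ∀ i, β ≤ hN.eigenvalues i) {θ : ℝ} {w : ι → ℝ} (hw : w ≠ 0) (hNw : N *ᵥ w = θ • w)
    {α : Type*} [Fintype α] (c : ι → α) (hc : ∀ u v, c u = c v → N u v = 0) :
    θ - β ≤ Fintype.card α * -β := by
  set W : α → ι → ℝ := fun i => {v | c v = i}.indicator w
  have hsum : ∑ i, W i = w := sum_indicator_fiber c w
  have hnorm : ∑ i, W i ⬝ᵥ W i = w ⬝ᵥ w := by
    simp only [W, Set.indicator_dotProduct_indicator, ← sum_dotProduct, sum_indicator_fiber]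
  have hw_pos : 0 < w ⬝ᵥ w := by simpa using dotProduct_star_self_pos_iff.mpr hw
  have hkey := (hN.posSemidef_sub_smul_one hβ).dotProduct_mulVec_sum_le univ W
  simp only [hsum, dotProduct_sub_smul_one_mulVec, hNw, dotProduct_smul, smul_eq_mul,
    indicator_fiber_dotProduct_mulVec_eq_zero hc, W, zero_sub, card_univ, sum_neg_distrib,
    ← mul_sum, hnorm] at hkey
  exact le_of_mul_le_mul_right (by linarith) hw_pos

end Matrix

namespace SimpleGraph

variable {V : Type*} [Fintype V] [DecidableEq V] {G : SimpleGraph V} [DecidableRel G.Adj]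

lemma mulVec_sqrt_degree (hdeg : ∀ v, 0 < G.degree v) :
    (diagonal (fun v => (√(G.degree v : ℝ))⁻¹) * G.adjMatrix ℝ *
      diagonal (fun v => (√(G.degree v : ℝ))⁻¹)) *ᵥ (fun v => √(G.degree v : ℝ)) =
      fun v => √(G.degree v : ℝ) := by
  have hone : diagonal (fun v => (√(G.degree v : ℝ))⁻¹) *ᵥ (fun v => √(G.degree v : ℝ)) =
      Function.const V 1 := by
    ext v
    simp [mulVec_diagonal, (Real.sqrt_pos.mpr (Nat.cast_pos.mpr (hdeg v))).ne']
  ext v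
  rw [← mulVec_mulVec, ← mulVec_mulVec, hone, mulVec_diagonal, adjMatrix_mulVec_const_apply,
    mul_one, inv_mul_eq_div, Real.div_sqrt]

lemma diagonal_mul_adjMatrix_mul_diagonal_apply_of_not_adj {d d' : V → ℝ} {u v : V}
    (h : ¬G.Adj u v) : (diagonal d * G.adjMatrix ℝ * diagonal d') u v = 0 := by
  rw [mul_diagonal, diagonal_mul, adjMatrix_apply, if_neg h, mul_zero, zero_mul]

end SimpleGraph

/-- **Normalized Hoffman bound.** Let `G` be a finite simple graph on `n` vertices with no
isolated vertices, at least one edge, and chromatic number `χ`.  Let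
`𝒜 = D^{-1/2} A D^{-1/2}` be the normalized adjacency matrix, with non-increasing
eigenvalue enumeration `μ*`.  Then `μ*_n < 0` and `1 ≤ (χ - 1)·(-μ*_n)`; equivalently
`χ ≥ 1 + 1/(-μ*_n)`. -/
theorem stmt_13 {n : ℕ} (hn : 0 < n) (G : SimpleGraph (Fin n)) [DecidableRel G.Adj]
    (hdeg : ∀ v : Fin n, 0 < G.degree v)
    (χ : ℕ) (hχ : G.chromaticNumber = (χ : ℕ∞))
    (N : Matrix (Fin n) (Fin n) ℝ)
    (hNdef : N = Matrix.diagonal (fun v => (Real.sqrt (G.degree v))⁻¹) * G.adjMatrix ℝ *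
      Matrix.diagonal (fun v => (Real.sqrt (G.degree v))⁻¹))
    (hN : N.IsHermitian)
    (μ : Fin n → ℝ) (hμa : Antitone μ)
    (hμ : ∃ e : Equiv.Perm (Fin n), μ = hN.eigenvalues ∘ e) :
    μ ⟨n - 1, by omega⟩ < 0 ∧
    1 ≤ ((χ : ℝ) - 1) * (-μ ⟨n - 1, by omega⟩) ∧
    (χ : ℝ) ≥ 1 + 1 / (-μ ⟨n - 1, by omega⟩) := by
  obtain ⟨e, rfl⟩ := hμ
  simp only [Function.comp_apply]
  obtain ⟨C⟩ : G.Colorable χ := SimpleGraph.chromaticNumber_le_iff_colorable.mp hχ.le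
  have hχ_pos : (1 : ℝ) ≤ χ := by exact_mod_cast Fin.pos (C ⟨0, hn⟩)
  set β := hN.eigenvalues (e ⟨n - 1, by omega⟩)
  have hβ : ∀ i, β ≤ hN.eigenvalues i := fun i => by
    simpa using hμa (show e.symm i ≤ ⟨n - 1, by omega⟩ from
      Fin.le_def.mpr (Nat.le_sub_one_of_lt (e.symm i).isLt))
  have hw : (fun v => √(G.degree v : ℝ)) ≠ 0 := fun h =>
    (Real.sqrt_pos.mpr (Nat.cast_pos.mpr (hdeg ⟨0, hn⟩))).ne' (congrFun h ⟨0, hn⟩)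
  have hNw : N *ᵥ (fun v => √(G.degree v : ℝ)) = (1 : ℝ) • fun v => √(G.degree v : ℝ) := by
    rw [one_smul, hNdef, SimpleGraph.mulVec_sqrt_degree hdeg]
  have hbound := hN.hoffman_bound hβ hw hNw C fun u v huv => hNdef ▸
    SimpleGraph.diagonal_mul_adjMatrix_mul_diagonal_apply_of_not_adj fun h => C.valid h huv
  rw [Fintype.card_fin] at hbound
  have hβ_neg : β < 0 := by nlinarith
  refine ⟨hβ_neg, by linarith, ?_⟩
  rw [ge_iff_le, ← le_sub_iff_add_le', div_le_iff₀ (neg_pos.mpr hβ_neg)]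
  linarith
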